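/- arXiv:1009.5189 — 2 statements merged into one kernel-verified Lean document; each statement's English description precedes it below -/
import Mathlib

section
/- Let α, β, β′, γ be real numbers with 0 < α < γ, and let x, y be real numbers with x < 1 and y < 1. Then, in terms of the Euler integral form of Appell's F₁: F₁(α, β, β′, γ; x, y) = (1−x)^(−β)·(1−y)^(γ−α−β′) · F₁(γ−α, β, γ−β−β′, γ; (x−y)/(x−1), y). Equivalently, ∫₀¹ u^(α−1)·(1−u)^(γ−α−1)·(1−u·x)^(−β)·(1−u·y)^(−β′) du = (1−x)^(−β)·(1−y)^(γ−α−β′) · ∫₀¹ ν^(γ−α−1)·(1−ν)^(α−1)·(1−ν·(x−y)/(x−1))^(−β)·(1−ν·y)^(−(γ−β−β′)) dν. -/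
open MeasureTheory

lemma one_sub_mul_pos {u x : ℝ} (hx : x < 1) (hu0 : 0 ≤ u) (hu1 : u ≤ 1) :
    0 < 1 - u * x := by
  rcases lt_or_eq_of_le hu1 with h | h
  · nlinarith [mul_nonneg hu0 (sub_pos.mpr hx).le]
  · subst h; simpa using hx

lemma beta_integrable (p q : ℝ) (hp : -1 < p) (hq : -1 < q) (h : ℝ → ℝ)
    (hh : ContinuousOn h (Set.Icc 0 1)) :
    IntervalIntegrable (fun u => u ^ p * (1 - u) ^ q * h u) volume 0 1 := by
  have hsub1 : Set.uIcc (0:ℝ) (1/2) ⊆ Set.Icc 0 1 := by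
    rw [Set.uIcc_of_le (by norm_num)]
    exact Set.Icc_subset_Icc le_rfl (by norm_num)
  have hsub2 : Set.uIcc (1/2:ℝ) 1 ⊆ Set.Icc 0 1 := by
    rw [Set.uIcc_of_le (by norm_num)]
    exact Set.Icc_subset_Icc (by norm_num) le_rfl
  have h1 : IntervalIntegrable (fun u => u ^ p * ((1 - u) ^ q * h u)) volume 0 (1/2) := by
    apply (intervalIntegral.intervalIntegrable_rpow' hp).mul_continuousOn
    apply ContinuousOn.mul
    · apply ContinuousOn.rpow_const (by fun_prop)
      intro u hu
      rw [Set.uIcc_of_le (by norm_num)] at hu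
      exact Or.inl (by rcases hu with ⟨_, h2⟩; intro hc; linarith [sub_eq_zero.mp hc])
    · exact hh.mono hsub1
  have h2 : IntervalIntegrable (fun u => (1 - u) ^ q * (u ^ p * h u)) volume (1/2) 1 := by
    have base : IntervalIntegrable (fun u : ℝ => u ^ q) volume 0 (1/2) :=
      intervalIntegral.intervalIntegrable_rpow' hq
    have := (base.comp_sub_left 1).symm
    norm_num at this
    apply this.mul_continuousOn
    apply ContinuousOn.mul
    · apply ContinuousOn.rpow_const (by fun_prop)
      intro u hu
      rw [Set.uIcc_of_le (by norm_num)] at hu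
      exact Or.inl (by rcases hu with ⟨h2, _⟩; intro hc; linarith)
    · exact hh.mono hsub2
  have e1 : (fun u : ℝ => u ^ p * ((1 - u) ^ q * h u)) = fun u => u ^ p * (1 - u) ^ q * h u := by
    funext u; ring
  have e2 : (fun u : ℝ => (1 - u) ^ q * (u ^ p * h u)) = fun u => u ^ p * (1 - u) ^ q * h u := by
    funext u; ring
  rw [e1] at h1; rw [e2] at h2
  exact h1.trans h2

lemma key_eq (α β β' γ x y ν : ℝ) (hx : x < 1) (hy : y < 1) (h0 : 0 < ν) (h1 : ν < 1) :
    (y - 1) / (1 - ν * y) ^ 2 *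
      (((1 - ν) / (1 - ν * y)) ^ (α - 1) * (1 - (1 - ν) / (1 - ν * y)) ^ (γ - α - 1) *
        (1 - (1 - ν) / (1 - ν * y) * x) ^ (-β) * (1 - (1 - ν) / (1 - ν * y) * y) ^ (-β')) =
    -((1 - x) ^ (-β) * (1 - y) ^ (γ - α - β') *
      (ν ^ (γ - α - 1) * (1 - ν) ^ (α - 1) * (1 - ν * ((x - y) / (x - 1))) ^ (-β) *
        (1 - ν * y) ^ (-(γ - β - β')))) := by
  have ht : 0 < 1 - ν * y := one_sub_mul_pos hy h0.le h1.le
  have hx1 : 0 < 1 - x := by linarith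
  have hy1 : 0 < 1 - y := by linarith
  have hx1' : x - 1 ≠ 0 := by intro h; linarith
  set t := 1 - ν * y with ht_def
  set w := (x - y) / (x - 1) with hw_def
  have hν1 : 0 < 1 - ν := by linarith
  have hw : 0 < 1 - ν * w := by
    have : 1 - ν * w = ((1 - ν) * (1 - x) + ν * (1 - y)) / (1 - x) := by
      rw [hw_def]; field_simp; ring
    rw [this]
    positivity
  have e1 : 1 - (1 - ν) / t = ν * (1 - y) / t := by
    rw [ht_def] at ht ⊢; field_simp; ring
  have e2 : 1 - (1 - ν) / t * x = (1 - x) * (1 - ν * w) / t := by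
    rw [hw_def]; rw [ht_def] at ht ⊢; field_simp; ring
  have e3 : 1 - (1 - ν) / t * y = (1 - y) / t := by
    rw [ht_def] at ht ⊢; field_simp; ring
  rw [e1, e2, e3]
  have hd : ∀ (a p : ℝ), 0 ≤ a → (a / t) ^ p = a ^ p * t ^ (-p) := fun a p ha => by
    rw [Real.div_rpow ha ht.le, Real.rpow_neg ht.le, div_eq_mul_inv]
  rw [hd _ _ hν1.le, hd _ _ (by positivity), hd _ _ (by positivity), hd _ _ hy1.le,
    Real.mul_rpow h0.le hy1.le, Real.mul_rpow hx1.le hw.le]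
  have e0 : (y - 1) / t ^ 2 = -((1 - y) * t ^ (-(2:ℝ))) := by
    rw [Real.rpow_neg ht.le, show ((2:ℝ)) = ((2:ℕ):ℝ) by norm_num, Real.rpow_natCast]
    field_simp
    ring
  rw [e0]
  have eY : (1 - y) ^ (γ - α - β') = (1 - y) * ((1 - y) ^ (γ - α - 1) * (1 - y) ^ (-β')) := by
    rw [show γ - α - β' = 1 + ((γ - α - 1) + (-β')) by ring, Real.rpow_add hy1,
      Real.rpow_add hy1, Real.rpow_one]
  have eT : t ^ (-(γ - β - β')) =
      t ^ (-(2:ℝ)) * (t ^ (-(α - 1)) * (t ^ (-(γ - α - 1)) * (t ^ β * t ^ β'))) := by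
    rw [show -(γ - β - β') = -(2:ℝ) + (-(α - 1) + (-(γ - α - 1) + (β + β'))) by ring,
      Real.rpow_add ht, Real.rpow_add ht, Real.rpow_add ht, Real.rpow_add ht]
  rw [eY, eT]
  simp only [neg_neg]
  ring

lemma main_integral (α β β' γ x y : ℝ)
    (hα : 0 < α) (hαγ : α < γ) (hx : x < 1) (hy : y < 1) :
    (∫ u in (0:ℝ)..1, u ^ (α - 1) * (1 - u) ^ (γ - α - 1) *
        (1 - u * x) ^ (-β) * (1 - u * y) ^ (-β')) =
      (1 - x) ^ (-β) * (1 - y) ^ (γ - α - β') *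
        ∫ ν in (0:ℝ)..1, ν ^ (γ - α - 1) * (1 - ν) ^ (α - 1) *
          (1 - ν * ((x - y) / (x - 1))) ^ (-β) * (1 - ν * y) ^ (-(γ - β - β')) := by
  have hx1 : 0 < 1 - x := by linarith
  have hy1 : 0 < 1 - y := by linarith
  have hx1' : x - 1 ≠ 0 := by intro h; linarith
  set w := (x - y) / (x - 1) with hw_def
  set f : ℝ → ℝ := fun ν => (1 - ν) / (1 - ν * y) with hf_def
  set f' : ℝ → ℝ := fun ν => (y - 1) / (1 - ν * y) ^ 2 with hf'_def
  set g : ℝ → ℝ := fun u => u ^ (α - 1) * (1 - u) ^ (γ - α - 1) *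
      (1 - u * x) ^ (-β) * (1 - u * y) ^ (-β') with hg_def
  set R : ℝ → ℝ := fun ν => ν ^ (γ - α - 1) * (1 - ν) ^ (α - 1) *
      (1 - ν * w) ^ (-β) * (1 - ν * y) ^ (-(γ - β - β')) with hR_def
  set C : ℝ := (1 - x) ^ (-β) * (1 - y) ^ (γ - α - β') with hC_def
  have ht : ∀ ν ∈ Set.Icc (0:ℝ) 1, 0 < 1 - ν * y := fun ν hν =>
    one_sub_mul_pos hy hν.1 hν.2
  have hf_mem : ∀ ν ∈ Set.Icc (0:ℝ) 1, f ν ∈ Set.Icc (0:ℝ) 1 := by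
    intro ν hν
    have h1 := ht ν hν
    constructor
    · exact div_nonneg (by linarith [hν.2]) h1.le
    · rw [hf_def]; dsimp only
      rw [div_le_one h1]
      nlinarith [mul_nonneg hν.1 hy1.le]
  have hf_mem' : ∀ ν ∈ Set.Ioo (0:ℝ) 1, f ν ∈ Set.Ioo (0:ℝ) 1 := by
    intro ν hν
    have h1 := ht ν (Set.Ioo_subset_Icc_self hν)
    constructor
    · exact div_pos (by linarith [hν.2]) h1
    · rw [hf_def]; dsimp only
      rw [div_lt_one h1]
      nlinarith [mul_pos hν.1 hy1]
  have hf_cont : ContinuousOn f (Set.uIcc (0:ℝ) 1) := by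
    rw [Set.uIcc_of_le (by norm_num)]
    apply ContinuousOn.div (by fun_prop) (by fun_prop)
    intro ν hν; exact (ht ν hν).ne'
  have hff' : ∀ ν ∈ Set.Ioo (0:ℝ) 1, HasDerivAt f (f' ν) ν := by
    intro ν hν
    have h1 := ht ν (Set.Ioo_subset_Icc_self hν)
    have hnum : HasDerivAt (fun ν : ℝ => 1 - ν) (-1) ν := by
      simpa using ((hasDerivAt_id ν).const_sub 1)
    have hden : HasDerivAt (fun ν : ℝ => 1 - ν * y) (-y) ν := by
      simpa using (((hasDerivAt_id ν).mul_const y).const_sub 1)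
    have hd := hnum.div hden h1.ne'
    refine hd.congr_deriv ?_
    rw [hf'_def]
    field_simp
    ring
  have hg_cont : ContinuousOn g (Set.Ioo (0:ℝ) 1) := by
    rw [hg_def]
    apply ContinuousOn.mul
    apply ContinuousOn.mul
    apply ContinuousOn.mul
    · exact ContinuousOn.rpow_const (by fun_prop) (fun u hu => Or.inl hu.1.ne')
    · exact ContinuousOn.rpow_const (by fun_prop) (fun u hu => Or.inl (by
        have := hu.2; intro hc; linarith [sub_eq_zero.mp hc]))
    · exact ContinuousOn.rpow_const (by fun_prop) (fun u hu => Or.inl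
        (one_sub_mul_pos hx hu.1.le hu.2.le).ne')
    · exact ContinuousOn.rpow_const (by fun_prop) (fun u hu => Or.inl
        (one_sub_mul_pos hy hu.1.le hu.2.le).ne')
  have hg_int : IntervalIntegrable g volume 0 1 := by
    have := beta_integrable (α - 1) (γ - α - 1) (by linarith) (by linarith)
      (fun u => (1 - u * x) ^ (-β) * (1 - u * y) ^ (-β'))
      (by
        apply ContinuousOn.mul
        · exact ContinuousOn.rpow_const (by fun_prop) (fun u hu => Or.inl
            (one_sub_mul_pos hx hu.1 hu.2).ne')
        · exact ContinuousOn.rpow_const (by fun_prop) (fun u hu => Or.inl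
            (one_sub_mul_pos hy hu.1 hu.2).ne'))
    have e : (fun u : ℝ => u ^ (α - 1) * (1 - u) ^ (γ - α - 1) *
        ((1 - u * x) ^ (-β) * (1 - u * y) ^ (-β'))) = g := by
      funext u; rw [hg_def]; ring
    rwa [e] at this
  have hw1 : ∀ ν ∈ Set.Icc (0:ℝ) 1, 0 < 1 - ν * w := by
    intro ν hν
    have h1 : 1 - ν * w = ((1 - ν) * (1 - x) + ν * (1 - y)) / (1 - x) := by
      rw [hw_def]; field_simp; ring
    rw [h1]
    apply div_pos _ hx1
    rcases lt_or_eq_of_le hν.2 with h | h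
    · nlinarith [mul_nonneg hν.1 hy1.le]
    · nlinarith [mul_nonneg hν.1 hy1.le]
  have hR_int : IntervalIntegrable R volume 0 1 := by
    have := beta_integrable (γ - α - 1) (α - 1) (by linarith) (by linarith)
      (fun ν => (1 - ν * w) ^ (-β) * (1 - ν * y) ^ (-(γ - β - β')))
      (by
        apply ContinuousOn.mul
        · exact ContinuousOn.rpow_const (by fun_prop) (fun ν hν => Or.inl (hw1 ν hν).ne')
        · exact ContinuousOn.rpow_const (by fun_prop) (fun ν hν => Or.inl (ht ν hν).ne'))
    have e : (fun ν : ℝ => ν ^ (γ - α - 1) * (1 - ν) ^ (α - 1) *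
        ((1 - ν * w) ^ (-β) * (1 - ν * y) ^ (-(γ - β - β')))) = R := by
      funext ν; rw [hR_def]; ring
    rwa [e] at this
  have hkey : ∀ ν ∈ Set.Ioo (0:ℝ) 1, f' ν • g (f ν) = -(C * R ν) := by
    intro ν hν
    rw [smul_eq_mul, hf_def, hf'_def, hg_def, hR_def, hC_def, hw_def]
    exact key_eq α β β' γ x y ν hx hy hν.1 hν.2
  have hae : ∀ᵐ ν ∂(volume : Measure ℝ), ν ∉ ({0, 1} : Set ℝ) :=
    ((Set.countable_singleton (1:ℝ)).insert 0).ae_notMem volume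
  have hRC_int : IntervalIntegrable (fun ν => -(C * R ν)) volume 0 1 :=
    (hR_int.const_mul C).neg
  have hsub : (∫ ν in (0:ℝ)..1, f' ν • (g ∘ f) ν) = ∫ u in (f 0)..(f 1), g u := by
    apply intervalIntegral.integral_comp_smul_deriv''' hf_cont
    · intro ν hν
      rw [min_def, max_def] at hν
      norm_num at hν
      exact ((hff' ν hν).hasDerivWithinAt)
    · rw [min_def, max_def]
      norm_num
      exact hg_cont.mono (by rintro u ⟨ν, hν, rfl⟩; exact hf_mem' ν hν)
    · apply IntegrableOn.mono_set _ (?_ : f '' Set.uIcc 0 1 ⊆ Set.Icc 0 1)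
      · have h1 := (intervalIntegrable_iff' (f := g)).mp hg_int
        rwa [Set.uIcc_of_le (by norm_num : (0:ℝ) ≤ 1)] at h1
      · rw [Set.uIcc_of_le (by norm_num : (0:ℝ) ≤ 1)]
        rintro u ⟨ν, hν, rfl⟩; exact hf_mem ν hν
    · rw [Set.uIcc_of_le (by norm_num : (0:ℝ) ≤ 1)]
      have h1 := (intervalIntegrable_iff' (f := fun ν => -(C * R ν))).mp hRC_int
      rw [Set.uIcc_of_le (by norm_num : (0:ℝ) ≤ 1)] at h1
      apply h1.congr
      filter_upwards [ae_restrict_mem measurableSet_Icc, ae_restrict_of_ae hae]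
        with ν h1 h2
      simp only [Set.mem_insert_iff, Set.mem_singleton_iff, not_or] at h2
      have hIoo : ν ∈ Set.Ioo (0:ℝ) 1 :=
        ⟨lt_of_le_of_ne h1.1 (Ne.symm h2.1), lt_of_le_of_ne h1.2 h2.2⟩
      exact (hkey ν hIoo).symm
  have hf0 : f 0 = 1 := by rw [hf_def]; norm_num
  have hf1 : f 1 = 0 := by rw [hf_def]; norm_num
  rw [hf0, hf1] at hsub
  have hleft : (∫ ν in (0:ℝ)..1, f' ν • (g ∘ f) ν) = ∫ ν in (0:ℝ)..1, -(C * R ν) := by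
    apply intervalIntegral.integral_congr_ae
    filter_upwards [hae] with ν h2 hmem
    rw [Set.uIoc_of_le (by norm_num : (0:ℝ) ≤ 1)] at hmem
    simp only [Set.mem_insert_iff, Set.mem_singleton_iff, not_or] at h2
    exact hkey ν ⟨hmem.1, lt_of_le_of_ne hmem.2 h2.2⟩
  have h10 : (∫ u in (1:ℝ)..0, g u) = -∫ u in (0:ℝ)..1, g u :=
    intervalIntegral.integral_symm 0 1
  have hneg : (∫ ν in (0:ℝ)..1, -(C * R ν)) = -(C * ∫ ν in (0:ℝ)..1, R ν) := by
    rw [intervalIntegral.integral_neg, intervalIntegral.integral_const_mul]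
  have : -(C * ∫ ν in (0:ℝ)..1, R ν) = -∫ u in (0:ℝ)..1, g u := by
    rw [← hneg, ← hleft, hsub, h10]
  linarith [this]

/-- Appell's first hypergeometric function of two variables,
in its Euler integral form. -/
noncomputable def F1 (a b b' c x y : ℝ) : ℝ :=
  (Real.Gamma c / (Real.Gamma a * Real.Gamma (c - a))) *
    ∫ u in (0:ℝ)..1, u ^ (a - 1) * (1 - u) ^ (c - a - 1) *
      (1 - u * x) ^ (-b) * (1 - u * y) ^ (-b')

theorem F1_transformation (α β β' γ x y : ℝ)
    (hα : 0 < α) (hαγ : α < γ) (hx : x < 1) (hy : y < 1) :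
    F1 α β β' γ x y =
      (1 - x) ^ (-β) * (1 - y) ^ (γ - α - β') *
        F1 (γ - α) β (γ - β - β') γ ((x - y) / (x - 1)) y ∧
    (∫ u in (0:ℝ)..1, u ^ (α - 1) * (1 - u) ^ (γ - α - 1) *
        (1 - u * x) ^ (-β) * (1 - u * y) ^ (-β')) =
      (1 - x) ^ (-β) * (1 - y) ^ (γ - α - β') *
        ∫ ν in (0:ℝ)..1, ν ^ (γ - α - 1) * (1 - ν) ^ (α - 1) *
          (1 - ν * ((x - y) / (x - 1))) ^ (-β) * (1 - ν * y) ^ (-(γ - β - β')) := by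
  have main := main_integral α β β' γ x y hα hαγ hx hy
  constructor
  · simp only [F1]
    rw [show γ - (γ - α) = α by ring, main]
    ring
  · exact main
end

section
/- Let x, y, z be real numbers with x < 1, y < 1, z < 1 and y ≠ 0. Then F_D(3/2, 1/2, 1, 1/2, 5/2; x, y, z) = (3/y) · ( F_D(1/2, 1/2, 1, 1/2, 3/2; x, y, z) − F₁(1/2, 1/2, 1/2, 3/2; x, z) ). -/
open MeasureTheory

/-- Lauricella's fourth hypergeometric function of three variables,
in its Euler integral form. -/
noncomputable def FD (a b₁ b₂ b₃ c x₁ x₂ x₃ : ℝ) : ℝ :=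
  (Real.Gamma c / (Real.Gamma a * Real.Gamma (c - a))) *
    ∫ u in (0:ℝ)..1, u ^ (a - 1) * (1 - u) ^ (c - a - 1) *
      (1 - u * x₁) ^ (-b₁) * (1 - u * x₂) ^ (-b₂) * (1 - u * x₃) ^ (-b₃)

lemma aux_pos {u x : ℝ} (hu : 0 ≤ u) (hu1 : u ≤ 1) (hx : x < 1) : 0 < 1 - u * x := by
  rcases le_or_gt x 0 with h | h
  · nlinarith [mul_nonneg hu (neg_nonneg.2 h)]
  · nlinarith [mul_le_of_le_one_left h.le hu1]

lemma aux_cont {x : ℝ} (hx : x < 1) (p : ℝ) :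
    ContinuousOn (fun u : ℝ => (1 - u * x) ^ p) (Set.Icc 0 1) := by
  apply ContinuousOn.rpow_const
  · exact (continuous_const.sub (continuous_id.mul continuous_const)).continuousOn
  · intro u hu
    exact Or.inl (aux_pos hu.1 hu.2 hx).ne'

theorem FD_contiguous_identity (x y z : ℝ)
    (hx : x < 1) (hy : y < 1) (hz : z < 1) (hy0 : y ≠ 0) :
    FD (3/2) (1/2) 1 (1/2) (5/2) x y z =
      (3 / y) * (FD (1/2) (1/2) 1 (1/2) (3/2) x y z - F1 (1/2) (1/2) (1/2) (3/2) x z) := by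
  have hG52 : Real.Gamma (5/2 : ℝ) = 3/4 * Real.sqrt Real.pi := by
    rw [show (5/2:ℝ) = 3/2 + 1 by norm_num, Real.Gamma_add_one (by norm_num),
      show (3/2:ℝ) = 1/2 + 1 by norm_num, Real.Gamma_add_one (by norm_num),
      Real.Gamma_one_half_eq]
    ring
  have hG32 : Real.Gamma (3/2 : ℝ) = 1/2 * Real.sqrt Real.pi := by
    rw [show (3/2:ℝ) = 1/2 + 1 by norm_num, Real.Gamma_add_one (by norm_num),
      Real.Gamma_one_half_eq]
  have hpi : Real.sqrt Real.pi ≠ 0 := by positivity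
  -- integrability
  have hψ : ContinuousOn (fun u : ℝ => (1 - u) ^ ((1:ℝ) - 1) *
      ((1 - u * x) ^ (-(1/2:ℝ)) * ((1 - u * y) ^ (-(1:ℝ)) * (1 - u * z) ^ (-(1/2:ℝ)))))
      (Set.Icc 0 1) := by
    apply ContinuousOn.mul
    · apply ContinuousOn.rpow_const
      · exact (continuous_const.sub continuous_id).continuousOn
      · intro u hu; right; norm_num
    · exact (aux_cont hx _).mul ((aux_cont hy _).mul (aux_cont hz _))
  have hψ2 : ContinuousOn (fun u : ℝ => (1 - u) ^ ((1:ℝ) - 1) *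
      ((1 - u * x) ^ (-(1/2:ℝ)) * (1 - u * z) ^ (-(1/2:ℝ)))) (Set.Icc 0 1) := by
    apply ContinuousOn.mul
    · apply ContinuousOn.rpow_const
      · exact (continuous_const.sub continuous_id).continuousOn
      · intro u hu; right; norm_num
    · exact (aux_cont hx _).mul (aux_cont hz _)
  have huIcc : Set.uIcc (0:ℝ) 1 = Set.Icc 0 1 := Set.uIcc_of_le (by norm_num)
  have hint1 : IntervalIntegrable (fun u : ℝ => u ^ ((1:ℝ)/2 - 1) * (1 - u) ^ ((1:ℝ) - 1) *
      (1 - u * x) ^ (-(1/2:ℝ)) * (1 - u * y) ^ (-(1:ℝ)) * (1 - u * z) ^ (-(1/2:ℝ)))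
      volume 0 1 := by
    have := (intervalIntegral.intervalIntegrable_rpow' (r := (1:ℝ)/2 - 1) (by norm_num)
      (a := (0:ℝ)) (b := 1)).mul_continuousOn (by rw [huIcc]; exact hψ)
    apply this.congr
    intro u _
    dsimp only
    ring
  have hint2 : IntervalIntegrable (fun u : ℝ => u ^ ((1:ℝ)/2 - 1) * (1 - u) ^ ((1:ℝ) - 1) *
      (1 - u * x) ^ (-(1/2:ℝ)) * (1 - u * z) ^ (-(1/2:ℝ))) volume 0 1 := by
    have := (intervalIntegral.intervalIntegrable_rpow' (r := (1:ℝ)/2 - 1) (by norm_num)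
      (a := (0:ℝ)) (b := 1)).mul_continuousOn (by rw [huIcc]; exact hψ2)
    apply this.congr
    intro u _
    dsimp only
    ring
  -- key pointwise/integral identity
  have key : (∫ u in (0:ℝ)..1, u ^ ((1:ℝ)/2 - 1) * (1 - u) ^ ((1:ℝ) - 1) *
        (1 - u * x) ^ (-(1/2:ℝ)) * (1 - u * y) ^ (-(1:ℝ)) * (1 - u * z) ^ (-(1/2:ℝ))) -
      (∫ u in (0:ℝ)..1, u ^ ((1:ℝ)/2 - 1) * (1 - u) ^ ((1:ℝ) - 1) *
        (1 - u * x) ^ (-(1/2:ℝ)) * (1 - u * z) ^ (-(1/2:ℝ))) =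
      y * ∫ u in (0:ℝ)..1, u ^ ((3:ℝ)/2 - 1) * (1 - u) ^ ((1:ℝ) - 1) *
        (1 - u * x) ^ (-(1/2:ℝ)) * (1 - u * y) ^ (-(1:ℝ)) * (1 - u * z) ^ (-(1/2:ℝ)) := by
    rw [← intervalIntegral.integral_sub hint1 hint2, ← intervalIntegral.integral_const_mul]
    apply intervalIntegral.integral_congr
    intro u hu
    dsimp only
    rw [huIcc] at hu
    obtain ⟨hu0, hu1⟩ := hu
    rcases eq_or_lt_of_le hu0 with rfl | hupos
    · simp [Real.zero_rpow, show ((1:ℝ)/2 - 1) ≠ 0 by norm_num,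
        show ((3:ℝ)/2 - 1) ≠ 0 by norm_num]
    · have hmul : u ^ ((1:ℝ)/2 - 1) * u = u ^ ((3:ℝ)/2 - 1) := by
        rw [show ((3:ℝ)/2 - 1) = (1/2 - 1) + 1 by norm_num,
          Real.rpow_add_one hupos.ne']
      have hty : 0 < 1 - u * y := aux_pos hu0 hu1 hy
      have h1 : (1 - u * y) ^ (-(1:ℝ)) = (1 - u * y)⁻¹ := by
        rw [Real.rpow_neg_one]
      rw [h1]
      set A := u ^ ((1:ℝ)/2 - 1)
      set B := (1 - u) ^ ((1:ℝ) - 1)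
      set P := (1 - u * x) ^ (-(1/2:ℝ))
      set Q := (1 - u * z) ^ (-(1/2:ℝ))
      rw [← hmul]
      field_simp
      ring
  -- finish
  simp only [FD, F1]
  rw [show ((5:ℝ)/2 - 3/2) = 1 by norm_num, show ((3:ℝ)/2 - 1/2) = 1 by norm_num,
    Real.Gamma_one, Real.Gamma_one_half_eq, hG52, hG32]
  set I1 := ∫ u in (0:ℝ)..1, u ^ ((1:ℝ)/2 - 1) * (1 - u) ^ ((1:ℝ) - 1) *
      (1 - u * x) ^ (-(1/2:ℝ)) * (1 - u * y) ^ (-(1:ℝ)) * (1 - u * z) ^ (-(1/2:ℝ)) with hI1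
  set I2 := ∫ u in (0:ℝ)..1, u ^ ((1:ℝ)/2 - 1) * (1 - u) ^ ((1:ℝ) - 1) *
      (1 - u * x) ^ (-(1/2:ℝ)) * (1 - u * z) ^ (-(1/2:ℝ)) with hI2
  set I := ∫ u in (0:ℝ)..1, u ^ ((3:ℝ)/2 - 1) * (1 - u) ^ ((1:ℝ) - 1) *
      (1 - u * x) ^ (-(1/2:ℝ)) * (1 - u * y) ^ (-(1:ℝ)) * (1 - u * z) ^ (-(1/2:ℝ)) with hI
  have hA : (3:ℝ)/4 * Real.sqrt Real.pi / (1/2 * Real.sqrt Real.pi * 1) = 3/2 := by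
    field_simp
    ring
  have hB : (1:ℝ)/2 * Real.sqrt Real.pi / (Real.sqrt Real.pi * 1) = 1/2 := by
    field_simp
  rw [hA, hB, show (1/2:ℝ) * I1 - 1/2 * I2 = 1/2 * (I1 - I2) by ring, key]
  field_simp
end
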